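/- (Lemma 2.10: decomposition of the potential.) In the matrix-product setting, let x ≥ 0 lie in D(G) and let Y ⊆ I be finite. Then all the iterates occurring in the series P_Y(G x) := ∑_{k=0}^∞ ((id − F_Y) ∘ P)ᵏ (F_Y (G x)) and G^Y x := ∑_{k=0}^∞ ((id − F_Y) ∘ P)ᵏ ((id − F_Y) x) are defined (every successive positive element lies in D(P)), both series converge in M, and G x = G^Y x + P_Y(G x). -/

import Mathlib

open Filter Topology
open scoped Classical ComplexOrder

namespace MartinMP

variable {I : Type*} {n : I → ℕ}

/-- The product `M = ∏ s, Matrix (Fin (n s)) (Fin (n s)) ℂ` of matrix algebras. -/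
abbrev MP (I : Type*) (n : I → ℕ) := ∀ s : I, Matrix (Fin (n s)) (Fin (n s)) ℂ

/-- The order on `M`: `x ≤ y` iff `(y − x) s` is positive semidefinite for every `s`. -/
def MPle (x y : MP I n) : Prop := ∀ s : I, ((y - x) s).PosSemidef

/-- `0 ≤ x`: every component of `x` is positive semidefinite. -/
def MPos (x : MP I n) : Prop := ∀ s : I, (x s).PosSemidef

/-- The projection `F_Y` killing all coordinates outside the finite set `Y`. -/
noncomputable def FY (Y : Finset I) (x : MP I n) : MP I n := fun s => if s ∈ Y then x s else 0

/-- `x` is finitely supported. -/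
def FinSupp (x : MP I n) : Prop := ∃ Y : Finset I, FY Y x = x

variable (P₀ : MP I n → MP I n)

/-- `x ∈ D(P)`: `x ≥ 0` and the net `(P₀ (F_Y x))_Y` (over finite `Y ⊆ I` ordered by
inclusion) converges in the product topology. -/
def InDP (x : MP I n) : Prop :=
  MPos x ∧ ∃ L : MP I n, Tendsto (fun Y : Finset I => P₀ (FY Y x)) atTop (nhds L)

/-- The extension `P` of `P₀`: `P x := lim_Y P₀ (F_Y x)` when the limit exists (`0` otherwise). -/
noncomputable def Papp (x : MP I n) : MP I n :=
  if h : ∃ L : MP I n, Tendsto (fun Y : Finset I => P₀ (FY Y x)) atTop (nhds L)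
  then h.choose else 0

/-- `x ∈ D(G)`: all iterates `Pᵏ x` are defined and the series `∑ₖ Pᵏ x` converges. -/
def InDG (x : MP I n) : Prop :=
  (∀ k : ℕ, InDP P₀ ((Papp P₀)^[k] x)) ∧
  ∃ L : MP I n,
    Tendsto (fun N : ℕ => ∑ k ∈ Finset.range N, (Papp P₀)^[k] x) atTop (nhds L)

/-- The potential `G x = ∑ₖ Pᵏ x` (junk value `0` if the series does not converge). -/
noncomputable def Gval (x : MP I n) : MP I n :=
  if h : ∃ L : MP I n,
      Tendsto (fun N : ℕ => ∑ k ∈ Finset.range N, (Papp P₀)^[k] x) atTop (nhds L)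
  then h.choose else 0

/-- `x` is superharmonic: `x ≥ 0`, `x ∈ D(P)` and `P x ≤ x`. -/
def Superharmonic (x : MP I n) : Prop := InDP P₀ x ∧ MPle (Papp P₀ x) x

/-- `x` is a potential: `x = G y` for some `y ∈ D(G)`. -/
def IsPotential (x : MP I n) : Prop := ∃ y : MP I n, InDG P₀ y ∧ x = Gval P₀ y

/-- One step of the operator `(id − F_Y) ∘ P`. -/
noncomputable def QY (Y : Finset I) (z : MP I n) : MP I n :=
  Papp P₀ z - FY Y (Papp P₀ z)

/-!
Write `u = G x` and `S_N = ∑_{k<N} Pᵏ x`. Since `P S_N = S_{N+1} - x` and `P₀ ∘ F_Y` is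
continuous, `u ∈ D(P)` with `P u = u - x`, and `Pᵐ u = u - S_m → 0`. Every element of the
order interval `[0, u]` lies in `D(P)`, and `Q = (id - F_Y) ∘ P` is additive on `[0, u]` and
maps it into itself. Iterating `(id - F_Y) u = (x - F_Y x) + Q (F_Y u) + Q ((id - F_Y) u)` gives
`(id - F_Y) u = ∑_{k<m} Qᵏ (x - F_Y x) + ∑_{k<m} Q^{k+1} (F_Y u) + Qᵐ ((id - F_Y) u)`.
Both partial sums increase and stay below `u`, so they converge because order intervals of
positive matrices are compact; the remainder lies between `0` and `Pᵐ u → 0`.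
-/

open scoped MatrixOrder
open Finset Function Set

theorem _root_.Monotone.exists_tendsto_of_isCompact {ι α : Type*} [Preorder ι]
    [IsDirectedOrder ι] [Nonempty ι] [TopologicalSpace α] [PartialOrder α]
    [OrderClosedTopology α] {f : ι → α} (hf : Monotone f) {K : Set α} (hK : IsCompact K)
    (hfK : ∀ i, f i ∈ K) :
    ∃ a, Tendsto f atTop (𝓝 a) := by
  -- every cluster point bounds the net from above, so any two cluster points are comparable
  have le_of_mapClusterPt : ∀ a, MapClusterPt a atTop f → ∀ i, f i ≤ a := fun a ha i =>
    isClosed_Ici.mem_of_mapClusterPt ha ((eventually_ge_atTop i).mono fun _ hj => hf hj)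
  obtain ⟨a, -, ha⟩ :=
    hK.exists_mapClusterPt (f := atTop) (tendsto_principal.2 (.of_forall hfK))
  refine ⟨a, hK.tendsto_nhds_of_unique_mapClusterPt (.of_forall hfK) fun b _ hb => ?_⟩
  exact le_antisymm
    (isClosed_Iic.mem_of_mapClusterPt hb (.of_forall (le_of_mapClusterPt a ha)))
    (isClosed_Iic.mem_of_mapClusterPt ha (.of_forall (le_of_mapClusterPt b hb)))

section Loewner

variable {m : Type*} [Fintype m] [DecidableEq m]

open scoped Matrix.Norms.L2Operator in
theorem _root_.Matrix.isClosed_setOf_nonneg : IsClosed {A : Matrix m m ℂ | 0 ≤ A} :=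
  CStarAlgebra.isClosed_nonneg

instance : OrderClosedTopology (Matrix m m ℂ) :=
  ⟨isClosed_le_of_isClosed_nonneg Matrix.isClosed_setOf_nonneg⟩

open scoped Matrix.Norms.L2Operator in
theorem _root_.Matrix.isCompact_Icc_zero (B : Matrix m m ℂ) : IsCompact (Icc 0 B) := by
  refine Metric.isCompact_of_isClosed_isBounded isClosed_Icc
    ((Metric.isBounded_iff_subset_closedBall 0).2 ⟨‖B‖, fun A hA => ?_⟩)
  rw [mem_closedBall_zero_iff]
  exact CStarAlgebra.norm_le_norm_of_nonneg_of_le hA.1 hA.2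

end Loewner

theorem mpos_iff_nonneg {x : MP I n} : MPos x ↔ 0 ≤ x := by
  simp only [MPos, Pi.le_def, Pi.zero_apply, Matrix.nonneg_iff_posSemidef]

theorem isCompact_Icc_zero (B : MP I n) : IsCompact (Icc 0 B) := by
  rw [← pi_univ_Icc]
  exact isCompact_univ_pi fun s => Matrix.isCompact_Icc_zero (B s)

theorem exists_tendsto_of_monotone {ι : Type*} [Preorder ι] [IsDirectedOrder ι] [Nonempty ι]
    {f : ι → MP I n} (hf : Monotone f) (hf0 : ∀ i, 0 ≤ f i) {B : MP I n}
    (hfB : ∀ i, f i ≤ B) :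
    ∃ L, Tendsto f atTop (𝓝 L) :=
  hf.exists_tendsto_of_isCompact (isCompact_Icc_zero B) fun i => ⟨hf0 i, hfB i⟩

theorem exists_tendsto_sum_range {f : ℕ → MP I n} (hf : ∀ k, 0 ≤ f k) {B : MP I n}
    (hB : ∀ N, ∑ k ∈ range N, f k ≤ B) :
    ∃ L, Tendsto (fun N => ∑ k ∈ range N, f k) atTop (𝓝 L) :=
  exists_tendsto_of_monotone ((sum_mono_set_of_nonneg hf).comp range_mono)
    (fun _ => sum_nonneg fun k _ => hf k) hB

section Projection

variable {Y Z : Finset I} {a b x : MP I n}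

theorem FY_add (Y : Finset I) (a b : MP I n) : FY Y (a + b) = FY Y a + FY Y b := by
  funext s
  by_cases h : s ∈ Y <;> simp [FY, h]

theorem FY_sub (Y : Finset I) (a b : MP I n) : FY Y (a - b) = FY Y a - FY Y b := by
  funext s
  by_cases h : s ∈ Y <;> simp [FY, h]

theorem FY_empty (x : MP I n) : FY ∅ x = 0 := by
  funext s
  simp [FY]

theorem FY_zero (Y : Finset I) : FY Y (0 : MP I n) = 0 := by
  funext s
  simp [FY]

theorem FY_insert {s : I} (hs : s ∉ Y) (x : MP I n) :
    FY (insert s Y) x = Pi.single s (x s) + FY Y x := by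
  funext t
  by_cases ht : t = s
  · subst ht
    simp [FY, hs]
  · simp [FY, ht]

theorem FY_mono (hab : a ≤ b) (Y : Finset I) : FY Y a ≤ FY Y b := fun s => by
  by_cases h : s ∈ Y <;> simp [FY, h, hab s]

theorem FY_nonneg (hx : 0 ≤ x) (Y : Finset I) : 0 ≤ FY Y x := fun s => by
  by_cases h : s ∈ Y
  · simpa [FY, h] using hx s
  · simp [FY, h]

theorem FY_le_self (hx : 0 ≤ x) (Y : Finset I) : FY Y x ≤ x := fun s => by
  by_cases h : s ∈ Y
  · simp [FY, h]
  · simpa [FY, h] using hx s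

theorem FY_le_FY_of_subset (hx : 0 ≤ x) (hYZ : Y ⊆ Z) : FY Y x ≤ FY Z x := fun s => by
  by_cases hY : s ∈ Y
  · simp [FY, hY, hYZ hY]
  · by_cases hZ : s ∈ Z
    · simpa [FY, hY, hZ] using hx s
    · simp [FY, hY, hZ]

theorem FY_eq_self_of_subset (hx : FY Y x = x) (hYZ : Y ⊆ Z) : FY Z x = x := by
  funext s
  by_cases hZ : s ∈ Z
  · simp [FY, hZ]
  · have hY : s ∉ Y := fun hY => hZ (hYZ hY)
    rw [← hx]
    simp [FY, hZ, hY]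

theorem FY_mem_Icc (hx : 0 ≤ x) (Y : Finset I) : FY Y x ∈ Icc 0 x :=
  ⟨FY_nonneg hx Y, FY_le_self hx Y⟩

theorem sub_FY_mem_Icc (hx : 0 ≤ x) (hxb : x ≤ b) (Y : Finset I) : x - FY Y x ∈ Icc 0 b :=
  ⟨sub_nonneg.2 (FY_le_self hx Y), (sub_le_self x (FY_nonneg hx Y)).trans hxb⟩

theorem finSupp_FY (Y : Finset I) (x : MP I n) : FinSupp (FY Y x) :=
  ⟨Y, by funext s; by_cases h : s ∈ Y <;> simp [FY, h]⟩

theorem finSupp_single (s : I) (A : Matrix (Fin (n s)) (Fin (n s)) ℂ) :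
    FinSupp (Pi.single s A : MP I n) := by
  refine ⟨{s}, funext fun t => ?_⟩
  by_cases ht : t = s
  · subst ht
    simp [FY]
  · simp [FY, ht]

theorem finSupp_sub (ha : FinSupp a) (hb : FinSupp b) : FinSupp (a - b) := by
  obtain ⟨Ya, hYa⟩ := ha
  obtain ⟨Yb, hYb⟩ := hb
  exact ⟨Ya ∪ Yb, by rw [FY_sub, FY_eq_self_of_subset hYa subset_union_left,
    FY_eq_self_of_subset hYb subset_union_right]⟩

end Projection

section PositiveMap

variable {P₀}
variable (hadd : ∀ x y : MP I n, FinSupp x → FinSupp y → P₀ (x + y) = P₀ x + P₀ y)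
variable (hsmul : ∀ (c : ℂ) (x : MP I n), FinSupp x → P₀ (c • x) = c • P₀ x)
variable (hpos : ∀ x : MP I n, FinSupp x → MPos x → MPos (P₀ x))

include hpos in
theorem P0_nonneg {p : MP I n} (hp : FinSupp p) (hp0 : 0 ≤ p) : 0 ≤ P₀ p :=
  mpos_iff_nonneg.1 (hpos p hp (mpos_iff_nonneg.2 hp0))

include hadd hpos in
theorem P0_mono {p q : MP I n} (hp : FinSupp p) (hq : FinSupp q) (hpq : p ≤ q) :
    P₀ p ≤ P₀ q := by
  have hqp := finSupp_sub hq hp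
  rw [← add_sub_cancel p q, hadd p (q - p) hp hqp]
  exact le_add_of_nonneg_right (P0_nonneg hpos hqp (sub_nonneg.2 hpq))

include hadd hpos in
theorem monotone_P0_FY {x : MP I n} (hx : 0 ≤ x) :
    Monotone fun Y : Finset I => P₀ (FY Y x) := fun _ _ hYZ =>
  P0_mono hadd hpos (finSupp_FY _ x) (finSupp_FY _ x) (FY_le_FY_of_subset hx hYZ)

include hadd hpos in
theorem P0_FY_mono {a b : MP I n} (hab : a ≤ b) (Y : Finset I) :
    P₀ (FY Y a) ≤ P₀ (FY Y b) :=
  P0_mono hadd hpos (finSupp_FY Y a) (finSupp_FY Y b) (FY_mono hab Y)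

include hadd hsmul in
theorem continuous_P0_FY (Y : Finset I) : Continuous fun z : MP I n => P₀ (FY Y z) := by
  induction Y using Finset.induction_on with
  | empty =>
    simp only [FY_empty]
    exact continuous_const
  | insert s Y hs ih =>
    simp only [FY_insert hs, hadd _ _ (finSupp_single s _) (finSupp_FY Y _)]
    -- on a single coordinate `P₀` is a linear map out of a finite-dimensional space
    let L : Matrix (Fin (n s)) (Fin (n s)) ℂ →ₗ[ℂ] MP I n :=
      { toFun := fun A => P₀ (Pi.single s A)
        map_add' := fun A B => by
          rw [Pi.single_add, hadd _ _ (finSupp_single s A) (finSupp_single s B)]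
        map_smul' := fun c A => by
          rw [Pi.single_smul, RingHom.id_apply, hsmul c _ (finSupp_single s A)] }
    exact (L.continuous_of_finiteDimensional.comp (continuous_apply s)).add ih

theorem InDP.nonneg {x : MP I n} (h : InDP P₀ x) : 0 ≤ x := mpos_iff_nonneg.1 h.1

theorem tendsto_papp {x L : MP I n}
    (h : Tendsto (fun Y : Finset I => P₀ (FY Y x)) atTop (𝓝 L)) :
    Tendsto (fun Y : Finset I => P₀ (FY Y x)) atTop (𝓝 (Papp P₀ x)) := by
  have hL : ∃ L, Tendsto (fun Y : Finset I => P₀ (FY Y x)) atTop (𝓝 L) := ⟨L, h⟩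
  rw [Papp, dif_pos hL]
  exact hL.choose_spec

theorem papp_eq_of_tendsto {x L : MP I n}
    (h : Tendsto (fun Y : Finset I => P₀ (FY Y x)) atTop (𝓝 L)) : Papp P₀ x = L :=
  tendsto_nhds_unique (tendsto_papp h) h

theorem InDP.tendsto {x : MP I n} (h : InDP P₀ x) :
    Tendsto (fun Y : Finset I => P₀ (FY Y x)) atTop (𝓝 (Papp P₀ x)) :=
  tendsto_papp h.2.choose_spec

theorem inDP_of_tendsto {x L : MP I n} (hx : 0 ≤ x)
    (h : Tendsto (fun Y : Finset I => P₀ (FY Y x)) atTop (𝓝 L)) : InDP P₀ x :=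
  ⟨mpos_iff_nonneg.2 hx, L, h⟩

include hadd in
theorem tendsto_P0_FY_add {a b : MP I n} (ha : InDP P₀ a) (hb : InDP P₀ b) :
    Tendsto (fun Y : Finset I => P₀ (FY Y (a + b))) atTop (𝓝 (Papp P₀ a + Papp P₀ b)) :=
  (ha.tendsto.add hb.tendsto).congr fun Y => by
    rw [FY_add, hadd _ _ (finSupp_FY Y a) (finSupp_FY Y b)]

include hadd in
theorem InDP.add {a b : MP I n} (ha : InDP P₀ a) (hb : InDP P₀ b) : InDP P₀ (a + b) :=
  inDP_of_tendsto (add_nonneg ha.nonneg hb.nonneg) (tendsto_P0_FY_add hadd ha hb)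

include hadd in
theorem papp_add {a b : MP I n} (ha : InDP P₀ a) (hb : InDP P₀ b) :
    Papp P₀ (a + b) = Papp P₀ a + Papp P₀ b :=
  papp_eq_of_tendsto (tendsto_P0_FY_add hadd ha hb)

include hadd in
theorem P0_zero : P₀ 0 = 0 := by
  have h0 : FinSupp (0 : MP I n) := ⟨∅, FY_empty 0⟩
  simpa using hadd 0 0 h0 h0

include hadd in
theorem tendsto_P0_FY_zero : Tendsto (fun Y : Finset I => P₀ (FY Y 0)) atTop (𝓝 0) := by
  simp only [FY_zero, P0_zero hadd]
  exact tendsto_const_nhds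

include hadd in
theorem InDP.sum {ι : Type*} (s : Finset ι) {f : ι → MP I n}
    (hf : ∀ i ∈ s, InDP P₀ (f i)) : InDP P₀ (∑ i ∈ s, f i) := by
  induction s using Finset.induction_on with
  | empty => exact inDP_of_tendsto le_rfl (tendsto_P0_FY_zero hadd)
  | insert i s hi ih =>
    rw [sum_insert hi]
    exact (hf i (mem_insert_self i s)).add hadd (ih fun j hj => hf j (mem_insert_of_mem hj))

include hadd in
theorem papp_sum {ι : Type*} (s : Finset ι) {f : ι → MP I n}
    (hf : ∀ i ∈ s, InDP P₀ (f i)) :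
    Papp P₀ (∑ i ∈ s, f i) = ∑ i ∈ s, Papp P₀ (f i) := by
  induction s using Finset.induction_on with
  | empty => exact papp_eq_of_tendsto (tendsto_P0_FY_zero hadd)
  | insert i s hi ih =>
    have hs : ∀ j ∈ s, InDP P₀ (f j) := fun j hj => hf j (mem_insert_of_mem hj)
    rw [sum_insert hi, sum_insert hi,
      papp_add hadd (hf i (mem_insert_self i s)) (InDP.sum hadd s hs), ih hs]

include hadd hpos in
theorem P0_FY_le_papp {x : MP I n} (h : InDP P₀ x) (Y : Finset I) :
    P₀ (FY Y x) ≤ Papp P₀ x :=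
  (monotone_P0_FY hadd hpos h.nonneg).ge_of_tendsto h.tendsto Y

include hpos in
theorem papp_nonneg {x : MP I n} (h : InDP P₀ x) : 0 ≤ Papp P₀ x :=
  ge_of_tendsto' h.tendsto fun Y => P0_nonneg hpos (finSupp_FY Y x) (FY_nonneg h.nonneg Y)

include hadd hpos in
theorem papp_mono {a b : MP I n} (hab : a ≤ b) (ha : InDP P₀ a) (hb : InDP P₀ b) :
    Papp P₀ a ≤ Papp P₀ b :=
  le_of_tendsto_of_tendsto' ha.tendsto hb.tendsto (P0_FY_mono hadd hpos hab)

include hadd hpos in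
theorem inDP_of_P0_FY_le {x B : MP I n} (hx : 0 ≤ x) (hB : ∀ Y, P₀ (FY Y x) ≤ B) :
    InDP P₀ x :=
  let ⟨_, hL⟩ := exists_tendsto_of_monotone (monotone_P0_FY hadd hpos hx)
    (fun Y => P0_nonneg hpos (finSupp_FY Y x) (FY_nonneg hx Y)) hB
  inDP_of_tendsto hx hL

theorem papp_le_of_P0_FY_le {x B : MP I n} (h : InDP P₀ x) (hB : ∀ Y, P₀ (FY Y x) ≤ B) :
    Papp P₀ x ≤ B :=
  le_of_tendsto' h.tendsto hB

include hadd hpos in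
theorem InDP.of_le {a b : MP I n} (ha : 0 ≤ a) (hab : a ≤ b) (hb : InDP P₀ b) : InDP P₀ a :=
  inDP_of_P0_FY_le hadd hpos ha fun Y =>
    (P0_FY_mono hadd hpos hab Y).trans (P0_FY_le_papp hadd hpos hb Y)

include hadd hpos in
theorem Superharmonic.inDP_of_mem_Icc {u z : MP I n} (hu : Superharmonic P₀ u)
    (hz : z ∈ Icc 0 u) : InDP P₀ z :=
  hu.1.of_le hadd hpos hz.1 hz.2

include hadd hpos in
theorem Superharmonic.mapsTo_papp {u : MP I n} (hu : Superharmonic P₀ u) :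
    MapsTo (Papp P₀) (Icc 0 u) (Icc 0 u) := fun _ hz =>
  have hz' := hu.inDP_of_mem_Icc hadd hpos hz
  ⟨papp_nonneg hpos hz', (papp_mono hadd hpos hz.2 hz' hu.1).trans hu.2⟩

variable (Y : Finset I)

include hadd in
theorem QY_add {a b : MP I n} (ha : InDP P₀ a) (hb : InDP P₀ b) :
    QY P₀ Y (a + b) = QY P₀ Y a + QY P₀ Y b := by
  simp only [QY, papp_add hadd ha hb, FY_add]
  abel

include hpos in
theorem QY_nonneg {z : MP I n} (hz : InDP P₀ z) : 0 ≤ QY P₀ Y z :=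
  sub_nonneg.2 (FY_le_self (papp_nonneg hpos hz) Y)

include hpos in
theorem QY_le_papp {z : MP I n} (hz : InDP P₀ z) : QY P₀ Y z ≤ Papp P₀ z :=
  sub_le_self _ (FY_nonneg (papp_nonneg hpos hz) Y)

include hadd hpos in
theorem Superharmonic.mapsTo_QY {u : MP I n} (hu : Superharmonic P₀ u) :
    MapsTo (QY P₀ Y) (Icc 0 u) (Icc 0 u) := fun _ hz =>
  have hz' := hu.inDP_of_mem_Icc hadd hpos hz
  ⟨QY_nonneg hpos Y hz', (QY_le_papp hpos Y hz').trans (hu.mapsTo_papp hadd hpos hz).2⟩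

include hadd hpos in
theorem Superharmonic.iterate_QY_add {u p q : MP I n} (hu : Superharmonic P₀ u)
    (hp : p ∈ Icc 0 u) (hq : q ∈ Icc 0 u) (m : ℕ) :
    (QY P₀ Y)^[m] (p + q) = (QY P₀ Y)^[m] p + (QY P₀ Y)^[m] q := by
  induction m with
  | zero => rfl
  | succ m ih =>
    simp only [iterate_succ_apply', ih]
    exact QY_add hadd Y (hu.inDP_of_mem_Icc hadd hpos ((hu.mapsTo_QY hadd hpos Y).iterate m hp))
      (hu.inDP_of_mem_Icc hadd hpos ((hu.mapsTo_QY hadd hpos Y).iterate m hq))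

include hadd hpos in
theorem Superharmonic.iterate_QY_le_iterate_papp {u z : MP I n} (hu : Superharmonic P₀ u)
    (hz : z ∈ Icc 0 u) (m : ℕ) : (QY P₀ Y)^[m] z ≤ (Papp P₀)^[m] u := by
  induction m with
  | zero => exact hz.2
  | succ m ih =>
    have hQz := hu.inDP_of_mem_Icc hadd hpos ((hu.mapsTo_QY hadd hpos Y).iterate m hz)
    have hPu := hu.inDP_of_mem_Icc hadd hpos
      ((hu.mapsTo_papp hadd hpos).iterate m ⟨hu.1.nonneg, le_rfl⟩)
    rw [iterate_succ_apply', iterate_succ_apply']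
    exact (QY_le_papp hpos Y hQz).trans (papp_mono hadd hpos ih hQz hPu)

include hadd hpos in
theorem Superharmonic.sub_FY_eq_sum_add_iterate {u x : MP I n} (hu : Superharmonic P₀ u)
    (hx : 0 ≤ x) (hxu : x ≤ u) (hPu : Papp P₀ u = u - x) (m : ℕ) :
    u - FY Y u = ∑ k ∈ range m, (QY P₀ Y)^[k] (x - FY Y x)
      + ∑ k ∈ range m, (QY P₀ Y)^[k + 1] (FY Y u) + (QY P₀ Y)^[m] (u - FY Y u) := by
  have ha := FY_mem_Icc hu.1.nonneg Y
  have hb := sub_FY_mem_Icc hx hxu Y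
  have hc := sub_FY_mem_Icc hu.1.nonneg le_rfl Y
  have hstep : u - FY Y u = (x - FY Y x) + QY P₀ Y u := by
    rw [QY, hPu, FY_sub]
    abel
  have hrest : ∀ m, (QY P₀ Y)^[m] (u - FY Y u) = (QY P₀ Y)^[m] (x - FY Y x)
      + ((QY P₀ Y)^[m + 1] (FY Y u) + (QY P₀ Y)^[m + 1] (u - FY Y u)) := by
    intro m
    conv_lhs => rw [hstep]
    rw [hu.iterate_QY_add hadd hpos Y hb (hu.mapsTo_QY hadd hpos Y ⟨hu.1.nonneg, le_rfl⟩) m,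
      ← hu.iterate_QY_add hadd hpos Y ha hc (m + 1), add_sub_cancel, iterate_succ_apply]
  induction m with
  | zero => simp
  | succ m ih =>
    calc u - FY Y u = _ := ih
      _ = _ := by
        rw [hrest m, sum_range_succ, sum_range_succ]
        abel

include hadd hpos in
theorem balayage_decomposition {u x : MP I n} (hu : InDP P₀ u) (hx : 0 ≤ x)
    (hPu : Papp P₀ u = u - x) (hlim : Tendsto (fun m => (Papp P₀)^[m] u) atTop (𝓝 0)) :
    (∀ m, InDP P₀ ((QY P₀ Y)^[m] (FY Y u))) ∧
    (∀ m, InDP P₀ ((QY P₀ Y)^[m] (x - FY Y x))) ∧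
    ∃ L₁ L₂ : MP I n,
      Tendsto (fun N => ∑ k ∈ range N, (QY P₀ Y)^[k] (FY Y u)) atTop (𝓝 L₁) ∧
      Tendsto (fun N => ∑ k ∈ range N, (QY P₀ Y)^[k] (x - FY Y x)) atTop (𝓝 L₂) ∧
      u = L₂ + L₁ := by
  have hxu : x ≤ u := sub_nonneg.1 (hPu ▸ papp_nonneg hpos hu)
  have hsup : Superharmonic P₀ u := ⟨hu, show Papp P₀ u ≤ u from hPu ▸ sub_le_self u hx⟩
  have hQ := hsup.mapsTo_QY hadd hpos Y
  have ha := FY_mem_Icc hu.nonneg Y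
  have hb := sub_FY_mem_Icc hx hxu Y
  have hc := sub_FY_mem_Icc hu.nonneg le_rfl Y
  have hsplit := hsup.sub_FY_eq_sum_add_iterate hadd hpos Y hx hxu hPu
  have hT0 : ∀ N, 0 ≤ ∑ k ∈ range N, (QY P₀ Y)^[k] (x - FY Y x) := fun N =>
    sum_nonneg fun k _ => (hQ.iterate k hb).1
  have hU0 : ∀ N, 0 ≤ ∑ k ∈ range N, (QY P₀ Y)^[k + 1] (FY Y u) := fun N =>
    sum_nonneg fun k _ => (hQ.iterate (k + 1) ha).1
  have hW0 : ∀ N, 0 ≤ (QY P₀ Y)^[N] (u - FY Y u) := fun N => (hQ.iterate N hc).1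
  obtain ⟨L₂, hT⟩ := exists_tendsto_sum_range (fun k => (hQ.iterate k hb).1) fun N =>
    ((le_add_of_nonneg_right (hU0 N)).trans (le_add_of_nonneg_right (hW0 N))).trans_eq
      (hsplit N).symm
  obtain ⟨L, hU⟩ := exists_tendsto_sum_range (f := fun k => (QY P₀ Y)^[k + 1] (FY Y u))
    (fun k => (hQ.iterate (k + 1) ha).1) fun N =>
    ((le_add_of_nonneg_left (hT0 N)).trans (le_add_of_nonneg_right (hW0 N))).trans_eq
      (hsplit N).symm
  have hW : Tendsto (fun N => (QY P₀ Y)^[N] (u - FY Y u)) atTop (𝓝 (u - FY Y u - L₂ - L)) :=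
    ((tendsto_const_nhds.sub hT).sub hU).congr fun N => by
      rw [sub_sub, sub_eq_iff_eq_add']
      exact hsplit N
  have hr : u - FY Y u - L₂ - L = 0 := le_antisymm
    (le_of_tendsto_of_tendsto' hW hlim (hsup.iterate_QY_le_iterate_papp hadd hpos Y hc))
    (ge_of_tendsto' hW hW0)
  refine ⟨fun m => hsup.inDP_of_mem_Icc hadd hpos (hQ.iterate m ha),
    fun m => hsup.inDP_of_mem_Icc hadd hpos (hQ.iterate m hb), FY Y u + L, L₂, ?_, hT, ?_⟩
  · refine (tendsto_add_atTop_iff_nat 1).1 ((tendsto_const_nhds.add hU).congr fun N => ?_)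
    rw [sum_range_succ', iterate_zero_apply, add_comm]
  · rw [← sub_eq_zero, ← hr]
    abel

section Potential

variable {x : MP I n} (hx : InDG P₀ x)
include hx

theorem tendsto_gval :
    Tendsto (fun N => ∑ k ∈ range N, (Papp P₀)^[k] x) atTop (𝓝 (Gval P₀ x)) := by
  rw [Gval, dif_pos hx.2]
  exact hx.2.choose_spec

theorem sum_iterate_papp_le_gval (N : ℕ) : ∑ k ∈ range N, (Papp P₀)^[k] x ≤ Gval P₀ x :=
  ((sum_mono_set_of_nonneg fun k => (hx.1 k).nonneg).comp range_mono).ge_of_tendsto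
    (tendsto_gval hx) N

theorem gval_nonneg : 0 ≤ Gval P₀ x :=
  ge_of_tendsto' (tendsto_gval hx) fun _ => sum_nonneg fun k _ => (hx.1 k).nonneg

include hadd in
theorem papp_sum_iterate_papp (N : ℕ) :
    Papp P₀ (∑ k ∈ range N, (Papp P₀)^[k] x) =
      ∑ k ∈ range (N + 1), (Papp P₀)^[k] x - x := by
  rw [papp_sum hadd _ fun k _ => hx.1 k, sum_range_succ', iterate_zero_apply,
    add_sub_cancel_right]
  simp only [iterate_succ_apply']

include hadd hsmul hpos in
theorem P0_FY_gval_le (Y : Finset I) : P₀ (FY Y (Gval P₀ x)) ≤ Gval P₀ x - x := by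
  refine le_of_tendsto' (((continuous_P0_FY hadd hsmul Y).tendsto _).comp (tendsto_gval hx))
    fun N => ?_
  calc P₀ (FY Y (∑ k ∈ range N, (Papp P₀)^[k] x))
      ≤ Papp P₀ (∑ k ∈ range N, (Papp P₀)^[k] x) :=
        P0_FY_le_papp hadd hpos (InDP.sum hadd _ fun k _ => hx.1 k) Y
    _ ≤ Gval P₀ x - x := by
        rw [papp_sum_iterate_papp hadd hx]
        exact sub_le_sub_right (sum_iterate_papp_le_gval hx (N + 1)) x

include hadd hsmul hpos in
theorem inDP_gval : InDP P₀ (Gval P₀ x) :=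
  inDP_of_P0_FY_le hadd hpos (gval_nonneg hx) (P0_FY_gval_le hadd hsmul hpos hx)

include hadd hsmul hpos in
theorem papp_gval : Papp P₀ (Gval P₀ x) = Gval P₀ x - x := by
  have hG := inDP_gval hadd hsmul hpos hx
  refine le_antisymm (papp_le_of_P0_FY_le hG (P0_FY_gval_le hadd hsmul hpos hx)) ?_
  refine le_of_tendsto' (((tendsto_gval hx).comp (tendsto_add_atTop_nat 1)).sub_const x)
    fun N => ?_
  rw [comp_apply, ← papp_sum_iterate_papp hadd hx]
  exact papp_mono hadd hpos (sum_iterate_papp_le_gval hx N)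
    (InDP.sum hadd _ fun k _ => hx.1 k) hG

include hadd hsmul hpos in
theorem iterate_papp_gval (m : ℕ) :
    (Papp P₀)^[m] (Gval P₀ x) = Gval P₀ x - ∑ k ∈ range m, (Papp P₀)^[k] x := by
  induction m with
  | zero => simp
  | succ m ih =>
    have hS := InDP.sum hadd (range m) fun k _ => hx.1 k
    have hrest := (inDP_gval hadd hsmul hpos hx).of_le hadd hpos
      (sub_nonneg.2 (sum_iterate_papp_le_gval hx m)) (sub_le_self _ hS.nonneg)
    have hsplit := papp_add hadd hS hrest
    rw [add_sub_cancel, papp_gval hadd hsmul hpos hx, papp_sum_iterate_papp hadd hx] at hsplit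
    rw [iterate_succ_apply', ih, eq_sub_of_add_eq' hsplit.symm]
    abel

include hadd hsmul hpos in
theorem tendsto_iterate_papp_gval :
    Tendsto (fun m => (Papp P₀)^[m] (Gval P₀ x)) atTop (𝓝 0) := by
  have h := (tendsto_const_nhds (x := Gval P₀ x)).sub (tendsto_gval hx)
  rw [sub_self] at h
  exact h.congr fun m => (iterate_papp_gval hadd hsmul hpos hx m).symm

end Potential

end PositiveMap

/-- Lemma 2.10: decomposition of the potential. For `x ≥ 0` in `D(G)` and finite `Y ⊆ I`, all
the iterates occurring in the series `P_Y (G x) = ∑ₖ ((id − F_Y) ∘ P)ᵏ (F_Y (G x))` and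
`G^Y x = ∑ₖ ((id − F_Y) ∘ P)ᵏ ((id − F_Y) x)` are defined (every successive positive element
lies in `D(P)`), both series converge in `M`, and `G x = G^Y x + P_Y (G x)`. -/
theorem potential_balayage_decomposition
    {I : Type*} {n : I → ℕ} (P₀ : MP I n → MP I n)
    (hadd : ∀ x y : MP I n, FinSupp x → FinSupp y → P₀ (x + y) = P₀ x + P₀ y)
    (hsmul : ∀ (c : ℂ) (x : MP I n), FinSupp x → P₀ (c • x) = c • P₀ x)
    (hpos : ∀ x : MP I n, FinSupp x → MPos x → MPos (P₀ x))
    (x : MP I n) (hx : InDG P₀ x) (Y : Finset I) :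
    (∀ m : ℕ, InDP P₀ ((QY P₀ Y)^[m] (FY Y (Gval P₀ x)))) ∧
    (∀ m : ℕ, InDP P₀ ((QY P₀ Y)^[m] (x - FY Y x))) ∧
    ∃ L₁ L₂ : MP I n,
      Tendsto (fun N : ℕ => ∑ k ∈ Finset.range N, (QY P₀ Y)^[k] (FY Y (Gval P₀ x)))
        atTop (nhds L₁) ∧
      Tendsto (fun N : ℕ => ∑ k ∈ Finset.range N, (QY P₀ Y)^[k] (x - FY Y x))
        atTop (nhds L₂) ∧
      Gval P₀ x = L₂ + L₁ :=
  balayage_decomposition hadd hpos Y (inDP_gval hadd hsmul hpos hx) (hx.1 0).nonneg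
    (papp_gval hadd hsmul hpos hx) (tendsto_iterate_papp_gval hadd hsmul hpos hx)

end MartinMP
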